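/- In the Cantor dyadic group FMRA setting, suppose E = {ω ∈ Δ₂ : m(σω) = m(σω+0.1) = 0} has measure zero. Then for every ω ∈ Δ₂, both σω and σω + 0.1 belong to η(V₀); moreover, almost every ω ∈ Δ₂ belongs to η(V₀). -/

import Mathlib

/-!
Common setting: the Vilenkin group `Vil p` (sequences `ℤ → ZMod p` vanishing
below some index), its discrete subgroup `H`, the neighbourhood `U`,
the shift automorphism, the generalized characters, and a bundled structure
`VilenkinSetting` carrying the Haar measures on the group and on its dual
(realized on the same underlying sequence space), the Plancherel (Fourier)
transform, translations and the dilation operator, with their standard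
compatibility properties.
-/

open MeasureTheory Filter Topology
open scoped ENNReal NNReal Pointwise Classical ComplexConjugate

noncomputable section

/-- The underlying additive group of the Vilenkin group: sequences
`x : ℤ → ZMod p` with `x j = 0` for all `j` below some `k = k(x)`. -/
def vilCarrier (p : ℕ) : AddSubgroup (ℤ → ZMod p) where
  carrier := {x | ∃ k : ℤ, ∀ j < k, x j = 0}
  zero_mem' := ⟨0, fun _ _ => rfl⟩
  add_mem' := by
    rintro a b ⟨k, hk⟩ ⟨l, hl⟩
    refine ⟨min k l, fun j hj => ?_⟩
    have h1 := hk j (lt_of_lt_of_le hj (min_le_left _ _))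
    have h2 := hl j (lt_of_lt_of_le hj (min_le_right _ _))
    simp_all [Pi.add_apply]
  neg_mem' := by
    rintro a ⟨k, hk⟩
    exact ⟨k, fun j hj => by simp [hk j hj]⟩

/-- The Vilenkin group (as a type). The dual group `G̃*` is realized on the
same type of sequences. -/
abbrev Vil (p : ℕ) : Type := vilCarrier p

/-- The discrete subgroup `H = {x : x_j = 0 for j > 0}` of the Vilenkin group.
On the dual side the same subgroup realizes the annihilator `H⊥`. -/
def Hsub (p : ℕ) : AddSubgroup (Vil p) where
  carrier := {x | ∀ j > 0, (x : ℤ → ZMod p) j = 0}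
  zero_mem' := fun _ _ => rfl
  add_mem' := by
    intro a b ha hb j hj
    simp [ha j hj, hb j hj]
  neg_mem' := by
    intro a ha j hj
    simp [ha j hj]

/-- The subgroup-neighbourhoods `U_l = {x : x_j = 0 for j ≤ l}` (as sets). -/
def UsetL (p : ℕ) (l : ℤ) : Set (Vil p) := {x | ∀ j ≤ l, (x : ℤ → ZMod p) j = 0}

/-- `U = U_0`; on the dual side this realizes `U*`. -/
def Uset (p : ℕ) : Set (Vil p) := UsetL p 0

/-- The topology of the Vilenkin group, generated by cosets of the `U_l`. -/
instance (p : ℕ) : TopologicalSpace (Vil p) :=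
  TopologicalSpace.generateFrom {s | ∃ (x : Vil p) (l : ℤ), s = (x + ·) '' UsetL p l}

/-- The Borel σ-algebra on the Vilenkin group. -/
instance (p : ℕ) : MeasurableSpace (Vil p) := borel (Vil p)

/-- The shift automorphism `A` (resp. `B` on the dual side): `(Ax)_j = x_{j+1}`. -/
def shiftMap (p : ℕ) : Vil p ≃+ Vil p where
  toFun x := ⟨fun j => (x : ℤ → ZMod p) (j + 1), by
    obtain ⟨k, hk⟩ := x.2
    exact ⟨k - 1, fun j hj => hk _ (by omega)⟩⟩
  invFun x := ⟨fun j => (x : ℤ → ZMod p) (j - 1), by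
    obtain ⟨k, hk⟩ := x.2
    exact ⟨k + 1, fun j hj => hk _ (by omega)⟩⟩
  left_inv x :=
    Subtype.ext (funext fun j =>
      congrArg (x : ℤ → ZMod p) (show j - 1 + 1 = j by omega))
  right_inv x :=
    Subtype.ext (funext fun j =>
      congrArg (x : ℤ → ZMod p) (show j + 1 - 1 = j by omega))
  map_add' x y := by
    apply Subtype.ext
    funext j
    rfl

/-- The element `0.ζ` of the (dual) Vilenkin group: coordinate `ζ` in
position `1` and `0` elsewhere. -/
def dotEl (p : ℕ) (ζ : ZMod p) : Vil p :=
  ⟨fun j => if j = 1 then ζ else 0, ⟨1, fun j hj => if_neg (by omega)⟩⟩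

/-- The generalized Walsh character pairing
`χ(x, ω) = exp((2πi/p) Σ_j x_j ω_{1-j})`. -/
def vilChar (p : ℕ) (x ω : Vil p) : ℂ :=
  Complex.exp (2 * Real.pi * Complex.I *
    (((∑ᶠ j : ℤ, (x : ℤ → ZMod p) j * (ω : ℤ → ZMod p) (1 - j)).val : ℂ) / (p : ℂ)))

/-- A bundled Vilenkin-group setting: Haar measures `μ` (on `G̃`) and `ν`
(on the dual `G̃*`, realized on the same sequence space), normalized so that
`U` (resp. `U*`) has measure one, the Plancherel/Fourier transform `F`,
the translation operators `T`, the dilation operator `Dil`, and their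
standard compatibility properties. -/
structure VilenkinSetting (p : ℕ) where
  /-- Haar measure on the Vilenkin group `G̃`. -/
  μ : Measure (Vil p)
  /-- Haar measure on the dual group `G̃*`. -/
  ν : Measure (Vil p)
  μ_inv : ∀ g : Vil p, MeasurePreserving (fun x => x + g) μ μ
  ν_inv : ∀ g : Vil p, MeasurePreserving (fun x => x + g) ν ν
  μ_U : μ (Uset p) = 1
  ν_U : ν (Uset p) = 1
  /-- The Fourier (Plancherel) transform `f ↦ f̂`, a unitary from `L²(G̃)`
  onto `L²(G̃*)`. -/
  F : Lp ℂ 2 μ ≃ₗᵢ[ℂ] Lp ℂ 2 ν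
  /-- The translation operators `T_g f = f(· ⊖ g)`. -/
  T : Vil p → (Lp ℂ 2 μ ≃ₗᵢ[ℂ] Lp ℂ 2 μ)
  T_apply : ∀ (g : Vil p) (f : Lp ℂ 2 μ),
    (T g f : Vil p → ℂ) =ᵐ[μ] fun x => f (x - g)
  F_T : ∀ h ∈ Hsub p, ∀ f : Lp ℂ 2 μ,
    (F (T h f) : Vil p → ℂ) =ᵐ[ν] fun ω => vilChar p h ω * F f ω
  /-- The dilation operator `(𝔻f)(x) = p^{1/2} f(Ax)`. -/
  Dil : Lp ℂ 2 μ ≃ₗᵢ[ℂ] Lp ℂ 2 μ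
  Dil_apply : ∀ f : Lp ℂ 2 μ,
    (Dil f : Vil p → ℂ) =ᵐ[μ] fun x => (Real.sqrt p : ℂ) * f (shiftMap p x)
  F_Dil : ∀ f : Lp ℂ 2 μ,
    (F (Dil f) : Vil p → ℂ) =ᵐ[ν] fun ω =>
      ((Real.sqrt p)⁻¹ : ℂ) * F f ((shiftMap p).symm ω)

namespace VilenkinSetting

variable {p : ℕ} (S : VilenkinSetting p)

/-- The principal shift-invariant space `⟨φ⟩`, the closed linear span of the
translates `T_h φ`, `h ∈ H`. -/
def pSIS (φ : Lp ℂ 2 S.μ) : Submodule ℂ (Lp ℂ 2 S.μ) :=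
  (Submodule.span ℂ (Set.range fun h : Hsub p => S.T h φ)).topologicalClosure

/-- Periodization of a function on the dual group:
`Σ_{h ∈ H⊥} |g(ω ⊕ h)|²` (valued in `ℝ≥0∞`). -/
def perF (g : Vil p → ℂ) (ω : Vil p) : ℝ≥0∞ :=
  ∑' h : Hsub p, (‖g (ω + (h : Vil p))‖₊ : ℝ≥0∞) ^ 2

/-- The periodization function `P_φ(ω) = Σ_{h ∈ H⊥} |φ̂(ω ⊕ h)|²`. -/
def Pper (φ : Lp ℂ 2 S.μ) (ω : Vil p) : ℝ≥0∞ :=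
  perF (S.F φ) ω

/-- `E_φ = supp P_φ`. -/
def Eset (φ : Lp ℂ 2 S.μ) : Set (Vil p) := {ω | S.Pper φ ω ≠ 0}

/-- `V_φ = {ω ∈ U* : φ̂_{‖ω} ≠ 0}`. -/
def Vset (φ : Lp ℂ 2 S.μ) : Set (Vil p) :=
  {ω ∈ Uset p | ∃ h ∈ Hsub p, S.F φ (ω + h) ≠ 0}

/-- The spectrum `η(𝕊) = {ω ∈ U* : 𝕊̂_{‖ω} ≠ {0}}` of a subspace
`𝕊 ⊆ L²(G̃)`. -/
def spec (V : Submodule ℂ (Lp ℂ 2 S.μ)) : Set (Vil p) :=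
  {ω ∈ Uset p | ∃ f ∈ V, ∃ h ∈ Hsub p, S.F f (ω + h) ≠ 0}

/-- The quantity `Σ_{h∈H} |⟨f, T_h φ⟩|²` appearing in the frame conditions. -/
def frameSum (φ f : Lp ℂ 2 S.μ) : ℝ :=
  ∑' h : Hsub p, ‖(inner ℂ f (S.T h φ) : ℂ)‖ ^ 2

/-- `(T_h φ)_{h∈H}` is a Bessel sequence with some bound `b > 0`. -/
def IsBessel (φ : Lp ℂ 2 S.μ) : Prop :=
  ∃ b : ℝ, 0 < b ∧ ∀ f : Lp ℂ 2 S.μ, S.frameSum φ f ≤ b * ‖f‖ ^ 2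

/-- `(T_h φ)_{h∈H}` is a frame for the closed subspace `W` with bounds
`a ≤ b`: the translates span `W` and the frame inequalities hold on `W`. -/
def IsFrameFor (φ : Lp ℂ 2 S.μ) (W : Submodule ℂ (Lp ℂ 2 S.μ)) (a b : ℝ) : Prop :=
  S.pSIS φ = W ∧
    ∀ f ∈ W, a * ‖f‖ ^ 2 ≤ S.frameSum φ f ∧ S.frameSum φ f ≤ b * ‖f‖ ^ 2

/-- `(T_h φ)_{h∈H}` is a Parseval frame for the closed subspace `W`. -/
def IsParsevalFrameFor (φ : Lp ℂ 2 S.μ) (W : Submodule ℂ (Lp ℂ 2 S.μ)) : Prop :=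
  S.pSIS φ = W ∧ ∀ f ∈ W, S.frameSum φ f = ‖f‖ ^ 2

/-- The common part of the definitions of MRA and FMRA: a nested sequence of
closed subspaces, compatible with the dilation, with dense union and trivial
intersection. -/
def IsLadder (V : ℤ → Submodule ℂ (Lp ℂ 2 S.μ)) : Prop :=
  (∀ j, IsClosed (V j : Set (Lp ℂ 2 S.μ))) ∧
  (∀ j, V j ≤ V (j + 1)) ∧
  (∀ j, ∀ f : Lp ℂ 2 S.μ, f ∈ V j ↔ S.Dil f ∈ V (j + 1)) ∧
  Dense (⋃ j : ℤ, (V j : Set (Lp ℂ 2 S.μ))) ∧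
  (∀ f : Lp ℂ 2 S.μ, (∀ j : ℤ, f ∈ V j) → f = 0)

/-- `(V_j)` is an MRA with scaling function `φ`: the translates of `φ` form
an orthonormal basis of `V₀`. -/
def IsMRA (V : ℤ → Submodule ℂ (Lp ℂ 2 S.μ)) (φ : Lp ℂ 2 S.μ) : Prop :=
  S.IsLadder V ∧ φ ∈ V 0 ∧ S.pSIS φ = V 0 ∧
    Orthonormal ℂ (fun h : Hsub p => S.T h φ)

/-- `(V_j)` is an FMRA with scaling function `φ` and frame bounds `a ≤ b`. -/
def IsFMRAWith (V : ℤ → Submodule ℂ (Lp ℂ 2 S.μ)) (φ : Lp ℂ 2 S.μ) (a b : ℝ) : Prop :=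
  S.IsLadder V ∧ φ ∈ V 0 ∧ 0 < a ∧ a ≤ b ∧ S.IsFrameFor φ (V 0) a b

/-- `(V_j)` is an FMRA with scaling function `φ`. -/
def IsFMRA (V : ℤ → Submodule ℂ (Lp ℂ 2 S.μ)) (φ : Lp ℂ 2 S.μ) : Prop :=
  ∃ a b : ℝ, S.IsFMRAWith V φ a b

/-- `(V_j)` is a Parseval FMRA with scaling function `φ`. -/
def IsParsevalFMRA (V : ℤ → Submodule ℂ (Lp ℂ 2 S.μ)) (φ : Lp ℂ 2 S.μ) : Prop :=
  S.IsLadder V ∧ φ ∈ V 0 ∧ S.IsParsevalFrameFor φ (V 0)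

/-- `m` is an `H⊥`-periodic function belonging to `L²(U*)` (extended
`H⊥`-periodically to the whole dual group). -/
def IsFilter (m : Vil p → ℂ) : Prop :=
  (∀ ω : Vil p, ∀ h ∈ Hsub p, m (ω + h) = m ω) ∧
    MemLp m 2 (S.ν.restrict (Uset p))

/-- The bracket `[g₁, g₂](ω) = Σ_{h∈H⊥} g₁(ω ⊕ h) conj (g₂(ω ⊕ h))`. -/
def brkt (g₁ g₂ : Vil p → ℂ) (ω : Vil p) : ℂ :=
  ∑' h : Hsub p, g₁ (ω + (h : Vil p)) * conj (g₂ (ω + (h : Vil p)))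

end VilenkinSetting

/-! ### Additional notions used in the Cantor-dyadic-group (p = 2) setting -/

/-- `Λ₁ = {n ∈ Λ : σ n ∈ Λ}`. -/
def Lam1 (p : ℕ) : Set (Vil p) :=
  {n | n ∈ Hsub p ∧ (shiftMap p).symm n ∈ Hsub p}

/-- `Λ ∖ Λ₁`. -/
def LamO (p : ℕ) : Set (Vil p) := (Hsub p : Set (Vil p)) \ Lam1 p

namespace VilenkinSetting

variable {p : ℕ} (S : VilenkinSetting p)

/-- `Σ_{n ∈ s} |φ̂(σ(ω + n))|²` for a subset `s` of the lattice. -/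
def sumShift (φ : Lp ℂ 2 S.μ) (s : Set (Vil p)) (ω : Vil p) : ℝ≥0∞ :=
  ∑' n : s, (‖S.F φ ((shiftMap p).symm (ω + (n : Vil p)))‖₊ : ℝ≥0∞) ^ 2

/-- `Δ₂ = {ω ∈ D : Σ_{n∈Λ₁}|φ̂(σ(ω+n))|² ≠ 0 and Σ_{n∈Λ∖Λ₁}|φ̂(σ(ω+n))|² ≠ 0}`. -/
def Delta2 (φ : Lp ℂ 2 S.μ) : Set (Vil p) :=
  {ω ∈ Uset p | S.sumShift φ (Lam1 p) ω ≠ 0 ∧ S.sumShift φ (LamO p) ω ≠ 0}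

/-- `Δ₁`: exactly one of the two partial periodizations is nonzero. -/
def Delta1 (φ : Lp ℂ 2 S.μ) : Set (Vil p) :=
  {ω ∈ Uset p |
    (S.sumShift φ (Lam1 p) ω ≠ 0 ∧ S.sumShift φ (LamO p) ω = 0) ∨
    (S.sumShift φ (Lam1 p) ω = 0 ∧ S.sumShift φ (LamO p) ω ≠ 0)}

/-- The blocked set `E = {ω ∈ Δ₂ : m(σω) = m(σω + 0.1) = 0}`. -/
def blockedSet (φ : Lp ℂ 2 S.μ) (m : Vil p → ℂ) : Set (Vil p) :=
  {ω ∈ S.Delta2 φ |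
    m ((shiftMap p).symm ω) = 0 ∧ m ((shiftMap p).symm ω + dotEl p 1) = 0}

/-- The spectrum `η(V₀) = {ω ∈ D : Σ_{n∈Λ}|φ̂(ω+n)|² ≠ 0}` of `V₀ = ⟨φ⟩`. -/
def etaV0 (φ : Lp ℂ 2 S.μ) : Set (Vil p) := {ω ∈ Uset p | S.Pper φ ω ≠ 0}

/-- `W₀`, the orthogonal complement of `V₀` in `V₁`. -/
def Wcompl (V : ℤ → Submodule ℂ (Lp ℂ 2 S.μ)) : Submodule ℂ (Lp ℂ 2 S.μ) :=
  V 1 ⊓ (V 0)ᗮ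

/-- Integer powers `𝔻^j` of the dilation operator. -/
def dilZ (j : ℤ) (f : Lp ℂ 2 S.μ) : Lp ℂ 2 S.μ :=
  if 0 ≤ j then (fun g => S.Dil g)^[j.toNat] f
  else (fun g => S.Dil.symm g)^[(-j).toNat] f

end VilenkinSetting

namespace VilenkinSetting

/-- The filter `m_ψ` of the candidate frame wavelet on the Cantor dyadic
group (`p = 2`):
`m_ψ(ω) = (−1)^{ω₀} conj(m(σω + 0.1)) Σ_{n'∈Λ∖Λ₁}|φ̂(σ(ω+n'))|²` on `Δ₂ + Λ`,
`1` on `(Δ₁ ∩ η(V₀)ᶜ) + Λ` and `0` otherwise. -/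
def mpsi (S : VilenkinSetting 2) (φ : Lp ℂ 2 S.μ) (m : Vil 2 → ℂ) (ω : Vil 2) : ℂ :=
  if ω ∈ S.Delta2 φ + (Hsub 2 : Set (Vil 2)) then
    (-1 : ℂ) ^ ((ω : ℤ → ZMod 2) 0).val *
      conj (m ((shiftMap 2).symm ω + dotEl 2 1)) *
      ((S.sumShift φ (LamO 2) ω).toReal : ℂ)
  else if ω ∈ (S.Delta1 φ ∩ (S.etaV0 φ)ᶜ) + (Hsub 2 : Set (Vil 2)) then 1
  else 0

/-- `ψ̂ = m_ψ · (φ̂ ∘ σ)`, the Fourier transform of the candidate frame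
wavelet. -/
def psiHat (S : VilenkinSetting 2) (φ : Lp ℂ 2 S.μ) (m : Vil 2 → ℂ) (ω : Vil 2) : ℂ :=
  S.mpsi φ m ω * S.F φ ((shiftMap 2).symm ω)

end VilenkinSetting


/-!
For `ω ∈ Δ₂` pick `n ∈ Λ₁` and `n' ∈ Λ ∖ Λ₁` with `φ̂(σ(ω + n)) ≠ 0` and `φ̂(σ(ω + n')) ≠ 0`.
Since `σn ∈ Λ` and (as `p = 2`) `σn' + 0.1 ∈ Λ`, these are values of `φ̂` on the cosets of
`σω` and of `σω + 0.1`, which therefore lie in `η(V₀)`. Off the null set `E`, one of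
`m(σω) = m(σ(ω + n))` and `m(σω + 0.1) = m(σ(ω + n'))` is nonzero, and the refinement equation
`φ̂(ω + k) = m(σ(ω + k)) φ̂(σ(ω + k))` then gives a nonzero value of `φ̂` on the coset of `ω`.
The refinement equation holds at all the points `σ(ω + k)`, `k ∈ Λ`, for almost every `ω`,
because `σ` pushes the Haar measure forward to `p` times itself.
-/

namespace Vil

variable {p : ℕ}

@[simp]
lemma coe_add_apply (x y : Vil p) (j : ℤ) :
    ((x + y : Vil p) : ℤ → ZMod p) j = (x : ℤ → ZMod p) j + (y : ℤ → ZMod p) j := rfl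

@[simp]
lemma shiftMap_apply (x : Vil p) (j : ℤ) :
    ((shiftMap p x : Vil p) : ℤ → ZMod p) j = (x : ℤ → ZMod p) (j + 1) := rfl

@[simp]
lemma shiftMap_symm_apply (x : Vil p) (j : ℤ) :
    (((shiftMap p).symm x : Vil p) : ℤ → ZMod p) j = (x : ℤ → ZMod p) (j - 1) := rfl

lemma add_mem_Uset {x y : Vil p} (hx : x ∈ Uset p) (hy : y ∈ Uset p) : x + y ∈ Uset p :=
  fun j hj => by simp [hx j hj, hy j hj]

lemma shiftMap_symm_mem_Uset {x : Vil p} (hx : x ∈ Uset p) : (shiftMap p).symm x ∈ Uset p :=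
  fun j hj => hx (j - 1) (by omega)

lemma dotEl_mem_Uset (ζ : ZMod p) : dotEl p ζ ∈ Uset p :=
  fun j hj => if_neg (by omega)

def single (l : ℤ) (ζ : ZMod p) : Vil p :=
  ⟨fun j => if j = l then ζ else 0, ⟨l, fun j hj => if_neg (by omega)⟩⟩

def cylinder (x : Vil p) (l : ℤ) : Set (Vil p) :=
  {y | ∀ j ≤ l, (y : ℤ → ZMod p) j = (x : ℤ → ZMod p) j}

def cylinders (p : ℕ) : Set (Set (Vil p)) :=
  {s | ∃ (x : Vil p) (l : ℤ), s = cylinder x l}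

lemma cylinder_eq_of_mem {x y : Vil p} {l : ℤ} (h : y ∈ cylinder x l) :
    cylinder y l = cylinder x l := by
  ext z
  exact forall₂_congr fun j hj => by rw [h j hj]

lemma cylinder_subset_of_le (x : Vil p) {k l : ℤ} (h : k ≤ l) : cylinder x l ⊆ cylinder x k :=
  fun _ hy j hj => hy j (hj.trans h)

lemma image_add_UsetL (x : Vil p) (l : ℤ) : (x + ·) '' UsetL p l = cylinder x l := by
  ext y
  constructor
  · rintro ⟨u, hu, rfl⟩ j hj
    simp [hu j hj]
  · intro hy
    refine ⟨-x + y, fun j hj => ?_, add_neg_cancel_left x y⟩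
    show -(x : ℤ → ZMod p) j + (y : ℤ → ZMod p) j = 0
    rw [hy j hj, neg_add_cancel]

lemma preimage_add_UsetL (x : Vil p) (l : ℤ) : (· + x) ⁻¹' UsetL p l = cylinder (-x) l := by
  ext y
  exact forall₂_congr fun j _ => (add_eq_zero_iff_eq_neg : _ + (x : ℤ → ZMod p) j = 0 ↔ _)

lemma preimage_shiftMap_symm_cylinder (x : Vil p) (l : ℤ) :
    (shiftMap p).symm ⁻¹' cylinder x l = cylinder (shiftMap p x) (l - 1) := by
  ext y
  simp only [cylinder, Set.mem_preimage, Set.mem_ofPred_eq, shiftMap_apply, shiftMap_symm_apply]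
  constructor
  · intro h j hj
    simpa using h (j + 1) (by omega)
  · intro h j hj
    simpa using h (j - 1) (by omega)

lemma UsetL_sub_one_eq_iUnion (l : ℤ) :
    UsetL p (l - 1) = ⋃ ζ : ZMod p, cylinder (single l ζ) l := by
  ext y
  simp only [UsetL, cylinder, single, Set.mem_ofPred_eq, Set.mem_iUnion]
  constructor
  · intro hy
    refine ⟨(y : ℤ → ZMod p) l, fun j hj => ?_⟩
    split_ifs with hjl
    · rw [hjl]
    · exact hy j (by omega)
  · rintro ⟨ζ, hy⟩ j hj
    rw [hy j (by omega), if_neg (by omega)]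

lemma pairwise_disjoint_cylinder_single (l : ℤ) :
    Pairwise (Function.onFun Disjoint fun ζ : ZMod p => cylinder (single l ζ) l) := by
  intro ζ ζ' hne
  refine Set.disjoint_left.2 fun y hy hy' => hne ?_
  simpa [single] using (hy l le_rfl).symm.trans (hy' l le_rfl)

lemma topology_eq_generateFrom_cylinders :
    (inferInstance : TopologicalSpace (Vil p)) = .generateFrom (cylinders p) := by
  show TopologicalSpace.generateFrom _ = _
  simp only [image_add_UsetL]
  rfl

lemma isOpen_cylinder (x : Vil p) (l : ℤ) : IsOpen (cylinder x l) := by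
  rw [← image_add_UsetL]
  exact TopologicalSpace.isOpen_generateFrom_of_mem ⟨x, l, rfl⟩

instance : BorelSpace (Vil p) := ⟨rfl⟩

lemma measurableSet_cylinder (x : Vil p) (l : ℤ) : MeasurableSet (cylinder x l) :=
  (isOpen_cylinder x l).measurableSet

lemma measurableSet_UsetL (l : ℤ) : MeasurableSet (UsetL p l) :=
  measurableSet_cylinder 0 l

lemma isPiSystem_cylinders : IsPiSystem (cylinders p) := by
  rintro _ ⟨x, l, rfl⟩ _ ⟨y, k, rfl⟩ ⟨a, hax, hay⟩
  rw [← cylinder_eq_of_mem hax, ← cylinder_eq_of_mem hay]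
  rcases le_total l k with h | h
  · exact ⟨a, k, Set.inter_eq_right.2 (cylinder_subset_of_le a h)⟩
  · exact ⟨a, l, Set.inter_eq_left.2 (cylinder_subset_of_le a h)⟩

lemma continuous_shiftMap_symm : Continuous (shiftMap p).symm := by
  refine continuous_generateFrom_iff.2 ?_
  rintro _ ⟨x, l, rfl⟩
  rw [image_add_UsetL, preimage_shiftMap_symm_cylinder]
  exact isOpen_cylinder _ _

lemma measurable_shiftMap_symm : Measurable (shiftMap p).symm :=
  continuous_shiftMap_symm.measurable

def truncate (x : Vil p) (l : ℤ) : Vil p :=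
  ⟨fun j => if j ≤ l then (x : ℤ → ZMod p) j else 0, by
    obtain ⟨k, hk⟩ := x.2
    exact ⟨k, fun j hj => by simp [hk j hj]⟩⟩

lemma truncate_apply_of_lt (x : Vil p) {j l : ℤ} (h : l < j) :
    ((truncate x l : Vil p) : ℤ → ZMod p) j = 0 :=
  if_neg (by omega)

lemma mem_cylinder_truncate (x : Vil p) (l : ℤ) : x ∈ cylinder (truncate x l) l :=
  fun _ hj => (if_pos hj).symm

lemma countable_setOf_forall_gt_eq_zero [NeZero p] (l : ℤ) :
    {x : Vil p | ∀ j > l, (x : ℤ → ZMod p) j = 0}.Countable := by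
  have hfin : ∀ x : {x : Vil p | ∀ j > l, (x : ℤ → ZMod p) j = 0},
      (Function.support ((x : Vil p) : ℤ → ZMod p)).Finite := by
    rintro ⟨x, hx⟩
    obtain ⟨k, hk⟩ := x.2
    refine (Set.finite_Icc k l).subset fun j hj => ⟨?_, ?_⟩
    · by_contra h
      exact hj (hk j (by omega))
    · by_contra h
      exact hj (hx j (by omega))
  refine Set.countable_coe_iff.1 (Function.Injective.countable
    (f := fun x => Finsupp.ofSupportFinite _ (hfin x)) fun x y hxy => ?_)
  have := congrArg DFunLike.coe hxy
  simp only [Finsupp.ofSupportFinite_coe] at this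
  exact Subtype.ext (Subtype.ext this)

lemma countable_Hsub [NeZero p] : (Hsub p : Set (Vil p)).Countable :=
  countable_setOf_forall_gt_eq_zero 0

lemma countable_cylinders [NeZero p] : (cylinders p).Countable := by
  refine (Set.countable_iUnion fun l : ℤ =>
    ((countable_setOf_forall_gt_eq_zero l).image (cylinder · l))).mono ?_
  rintro _ ⟨x, l, rfl⟩
  exact Set.mem_iUnion.2 ⟨l, truncate x l, fun j hj => truncate_apply_of_lt x hj,
    cylinder_eq_of_mem fun _ hj => if_pos hj⟩

instance [NeZero p] : SecondCountableTopology (Vil p) :=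
  ⟨⟨cylinders p, countable_cylinders, topology_eq_generateFrom_cylinders⟩⟩

lemma borel_eq_generateFrom_cylinders [NeZero p] :
    (inferInstance : MeasurableSpace (Vil p)) = .generateFrom (cylinders p) :=
  borel_eq_generateFrom_of_subbasis topology_eq_generateFrom_cylinders

lemma shiftMap_symm_add_dotEl_mem_Hsub {n : Vil 2} (hn : n ∈ LamO 2) :
    (shiftMap 2).symm n + dotEl 2 1 ∈ Hsub 2 := by
  obtain ⟨hnΛ, hnΛ₁⟩ := hn
  have hn₀ : (n : ℤ → ZMod 2) 0 = 1 := by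
    by_contra h
    refine hnΛ₁ ⟨hnΛ, fun j hj => ?_⟩
    rcases (show j = 1 ∨ 1 < j by omega) with rfl | hj
    · simpa using (show ∀ a : ZMod 2, a ≠ 1 → a = 0 by decide) _ h
    · exact hnΛ (j - 1) (by omega)
  intro j hj
  simp only [dotEl, coe_add_apply, shiftMap_symm_apply]
  rcases (show j = 1 ∨ 1 < j by omega) with rfl | hj
  · simp only [hn₀, sub_self]
    decide
  · simp [hnΛ (j - 1) (by omega), show j ≠ 1 by omega]

lemma add_self (x : Vil 2) : x + x = 0 :=
  Subtype.ext (funext fun _ => CharTwo.add_self_eq_zero _)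

lemma shiftMap_symm_add_eq_add_dotEl (ω n : Vil 2) :
    (shiftMap 2).symm (ω + n) =
      ((shiftMap 2).symm ω + dotEl 2 1) + ((shiftMap 2).symm n + dotEl 2 1) := by
  rw [map_add, add_add_add_comm, add_self, add_zero]

end Vil

namespace VilenkinSetting

open Vil

section

variable {p : ℕ} (S : VilenkinSetting p)

lemma measure_cylinder (x : Vil p) (l : ℤ) : S.ν (cylinder x l) = S.ν (UsetL p l) := by
  rw [← neg_neg x, ← preimage_add_UsetL,
    (S.ν_inv (-x)).measure_preimage (measurableSet_UsetL l).nullMeasurableSet]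

lemma measure_UsetL_sub_one [NeZero p] (l : ℤ) :
    S.ν (UsetL p (l - 1)) = p * S.ν (UsetL p l) := by
  rw [UsetL_sub_one_eq_iUnion, measure_iUnion (pairwise_disjoint_cylinder_single l)
    fun _ => measurableSet_cylinder _ _]
  simp only [measure_cylinder, tsum_fintype, Finset.sum_const, Finset.card_univ, ZMod.card,
    nsmul_eq_mul]

lemma map_shiftMap_symm [NeZero p] : S.ν.map (shiftMap p).symm = (p : ℝ≥0∞) • S.ν := by
  have h_eq : ∀ s ∈ cylinders p, S.ν.map (shiftMap p).symm s = ((p : ℝ≥0∞) • S.ν) s := by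
    rintro _ ⟨x, l, rfl⟩
    rw [Measure.map_apply measurable_shiftMap_symm (measurableSet_cylinder x l),
      preimage_shiftMap_symm_cylinder, measure_cylinder, measure_UsetL_sub_one,
      Measure.smul_apply, smul_eq_mul, measure_cylinder]
  refine Measure.ext_of_generateFrom_of_cover_subset borel_eq_generateFrom_cylinders
    isPiSystem_cylinders (T := (cylinder · 0) '' Hsub p) ?_ (countable_Hsub.image _) ?_ ?_ h_eq
  · rintro _ ⟨x, -, rfl⟩
    exact ⟨x, 0, rfl⟩
  · exact Set.sUnion_eq_univ_iff.2 fun y =>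
      ⟨_, ⟨truncate y 0, fun _ hj => truncate_apply_of_lt y hj, rfl⟩, mem_cylinder_truncate y 0⟩
  · rintro _ ⟨x, -, rfl⟩
    rw [h_eq _ ⟨x, 0, rfl⟩, Measure.smul_apply, measure_cylinder, smul_eq_mul]
    exact ENNReal.mul_ne_top (ENNReal.natCast_ne_top p) (S.ν_U ▸ ENNReal.one_ne_top)

lemma quasiMeasurePreserving_shiftMap_symm [NeZero p] :
    Measure.QuasiMeasurePreserving (shiftMap p).symm S.ν S.ν :=
  ⟨measurable_shiftMap_symm, S.map_shiftMap_symm ▸ Measure.smul_absolutelyContinuous⟩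

lemma ae_forall_shiftMap_symm_add [NeZero p] {P : Vil p → Prop} (h : ∀ᵐ ω ∂S.ν, P ω) :
    ∀ᵐ ω ∂S.ν, ∀ n : Hsub p, P ((shiftMap p).symm (ω + n)) := by
  have : Countable (Hsub p) := countable_Hsub.to_subtype
  refine ae_all_iff.2 fun n => ?_
  exact (S.quasiMeasurePreserving_shiftMap_symm.comp (S.ν_inv n).quasiMeasurePreserving).ae h

lemma measurable_sumShift (φ : Lp ℂ 2 S.μ) {s : Set (Vil p)} (hs : s.Countable) :
    Measurable (S.sumShift φ s) := by
  have := hs.to_subtype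
  refine Measurable.tsum fun n => ?_
  have hσ := measurable_shiftMap_symm.comp (S.ν_inv n).measurable
  have hF := (Lp.stronglyMeasurable (S.F φ)).measurable.comp hσ
  exact hF.nnnorm.coe_nnreal_ennreal.pow_const 2

lemma measurableSet_Delta2 [NeZero p] (φ : Lp ℂ 2 S.μ) : MeasurableSet (S.Delta2 φ) := by
  have h₁ := S.measurable_sumShift φ (countable_Hsub.mono fun _ hn => hn.1 : (Lam1 p).Countable)
  have h₀ := S.measurable_sumShift φ (countable_Hsub.mono Set.sdiff_subset : (LamO p).Countable)
  exact (measurableSet_UsetL 0).inter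
    ((h₁ (measurableSet_singleton 0)).compl.inter (h₀ (measurableSet_singleton 0)).compl)

lemma mem_etaV0_of_ne_zero {φ : Lp ℂ 2 S.μ} {ω n : Vil p} (hω : ω ∈ Uset p) (hn : n ∈ Hsub p)
    (h : S.F φ (ω + n) ≠ 0) : ω ∈ S.etaV0 φ := by
  refine ⟨hω, fun h0 => h ?_⟩
  rw [Pper, perF, ENNReal.tsum_eq_zero] at h0
  simpa using h0 ⟨n, hn⟩

lemma exists_ne_zero_of_sumShift_ne_zero {φ : Lp ℂ 2 S.μ} {s : Set (Vil p)} {ω : Vil p}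
    (h : S.sumShift φ s ω ≠ 0) : ∃ n ∈ s, S.F φ ((shiftMap p).symm (ω + n)) ≠ 0 := by
  contrapose! h
  rw [sumShift, ENNReal.tsum_eq_zero]
  rintro ⟨n, hn⟩
  simp [h n hn, -map_add]

lemma shiftMap_symm_mem_etaV0 {φ : Lp ℂ 2 S.μ} {ω : Vil p} (hω : ω ∈ Uset p)
    (h : S.sumShift φ (Lam1 p) ω ≠ 0) : (shiftMap p).symm ω ∈ S.etaV0 φ := by
  obtain ⟨n, hn, hne⟩ := S.exists_ne_zero_of_sumShift_ne_zero h
  exact S.mem_etaV0_of_ne_zero (shiftMap_symm_mem_Uset hω) hn.2 (by rwa [← map_add])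

end

section Cantor

variable (S : VilenkinSetting 2)

lemma shiftMap_symm_add_dotEl_mem_etaV0 {φ : Lp ℂ 2 S.μ} {ω : Vil 2}
    (hω : ω ∈ Uset 2) (h : S.sumShift φ (LamO 2) ω ≠ 0) :
    (shiftMap 2).symm ω + dotEl 2 1 ∈ S.etaV0 φ := by
  obtain ⟨n, hn, hne⟩ := S.exists_ne_zero_of_sumShift_ne_zero h
  refine S.mem_etaV0_of_ne_zero (add_mem_Uset (shiftMap_symm_mem_Uset hω) (dotEl_mem_Uset 1))
    (shiftMap_symm_add_dotEl_mem_Hsub hn) ?_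
  rwa [← shiftMap_symm_add_eq_add_dotEl]

lemma mem_etaV0_of_mem_Delta2 {φ : Lp ℂ 2 S.μ} {m : Vil 2 → ℂ}
    (hm : ∀ ω : Vil 2, ∀ h ∈ Hsub 2, m (ω + h) = m ω) {ω : Vil 2} (hω : ω ∈ S.Delta2 φ)
    (hωE : ω ∉ S.blockedSet φ m)
    (hscale : ∀ n : Hsub 2, S.F φ (ω + n) =
      m ((shiftMap 2).symm (ω + n)) * S.F φ ((shiftMap 2).symm (ω + n))) :
    ω ∈ S.etaV0 φ := by
  by_cases hm₁ : m ((shiftMap 2).symm ω) = 0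
  · have hm₂ : m ((shiftMap 2).symm ω + dotEl 2 1) ≠ 0 := fun hm₂ => hωE ⟨hω, hm₁, hm₂⟩
    obtain ⟨n, hn, hne⟩ := S.exists_ne_zero_of_sumShift_ne_zero hω.2.2
    refine S.mem_etaV0_of_ne_zero hω.1 hn.1 ?_
    rw [hscale ⟨n, hn.1⟩]
    refine mul_ne_zero ?_ hne
    rwa [shiftMap_symm_add_eq_add_dotEl, hm _ _ (shiftMap_symm_add_dotEl_mem_Hsub hn)]
  · obtain ⟨n, hn, hne⟩ := S.exists_ne_zero_of_sumShift_ne_zero hω.2.1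
    refine S.mem_etaV0_of_ne_zero hω.1 hn.1 ?_
    rw [hscale ⟨n, hn.1⟩]
    refine mul_ne_zero ?_ hne
    rwa [map_add, hm _ _ hn.2]

end Cantor

end VilenkinSetting

theorem sigma_mem_spectrum_of_blocked_null_general
    (S : VilenkinSetting 2)
    (φ : Lp ℂ 2 S.μ)
    (m : Vil 2 → ℂ) (hm : S.IsFilter m)
    (href : ∀ᵐ ω ∂S.ν, S.F φ (shiftMap 2 ω) = m ω * S.F φ ω)
    (hE : S.ν (S.blockedSet φ m) = 0) :
    (∀ ω ∈ S.Delta2 φ,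
      (shiftMap 2).symm ω ∈ S.etaV0 φ ∧
      (shiftMap 2).symm ω + dotEl 2 1 ∈ S.etaV0 φ) ∧
    (∀ᵐ ω ∂(S.ν.restrict (S.Delta2 φ)), ω ∈ S.etaV0 φ) := by
  refine ⟨fun ω hω => ⟨S.shiftMap_symm_mem_etaV0 hω.1 hω.2.1,
    S.shiftMap_symm_add_dotEl_mem_etaV0 hω.1 hω.2.2⟩, ?_⟩
  rw [ae_restrict_iff' (S.measurableSet_Delta2 φ)]
  filter_upwards [measure_eq_zero_iff_ae_notMem.mp hE, S.ae_forall_shiftMap_symm_add href]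
    with ω hωE hscale hω
  exact S.mem_etaV0_of_mem_Delta2 hm.1 hω hωE fun n => by simpa using hscale n

/-- (Cantor dyadic group, `p = 2`.) If
`E = {ω ∈ Δ₂ : m(σω) = m(σω+0.1) = 0}` is null, then for every `ω ∈ Δ₂`
both `σω` and `σω + 0.1` belong to `η(V₀)`, and almost every `ω ∈ Δ₂`
belongs to `η(V₀)`. -/
theorem sigma_mem_spectrum_of_blocked_null
    (S : VilenkinSetting 2) (V : ℤ → Submodule ℂ (Lp ℂ 2 S.μ))
    (φ : Lp ℂ 2 S.μ) (hV : S.IsFMRA V φ)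
    (m : Vil 2 → ℂ) (hm : S.IsFilter m)
    (href : ∀ᵐ ω ∂S.ν, S.F φ (shiftMap 2 ω) = m ω * S.F φ ω)
    (hE : S.ν (S.blockedSet φ m) = 0) :
    (∀ ω ∈ S.Delta2 φ,
      (shiftMap 2).symm ω ∈ S.etaV0 φ ∧
      (shiftMap 2).symm ω + dotEl 2 1 ∈ S.etaV0 φ) ∧
    (∀ᵐ ω ∂(S.ν.restrict (S.Delta2 φ)), ω ∈ S.etaV0 φ) :=
  sigma_mem_spectrum_of_blocked_null_general S φ m hm href hE
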